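/- In the Set Cover reduction graph (with the isolated target t connected by edges to a subset A of X-nodes), the 2-hop neighborhood of t satisfies N²_{G'}(t) = {x_i : S_i ∈ A} ∪ {y_j : u_j ∈ ∪_{S_i ∈ A} S_i}, hence |N²_{G'}(t)| = |A| + |∪_{S_i ∈ A} S_i| ≤ |A| + |U|, with equality in the second term iff A covers U. -/

import Mathlib

/-- The 2-hop neighborhood of `t`: nodes other than `t` at shortest-path distance ≤ 2. -/
def twoHop {V : Type*} (G : SimpleGraph V) (t : V) : Set V :=
  {v | v ≠ t ∧ (G.Adj t v ∨ ∃ w, G.Adj t w ∧ G.Adj w v)}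

/-- The Set-Cover reduction graph: bipartite graph between subset-nodes `x_i` and
element-nodes `y_j` with an edge iff `u_j ∈ S_i`, plus an extra target node `t = none`
joined to the subset-nodes indexed by `A`. -/
def redGraph {n m : ℕ} (S : Fin m → Finset (Fin n)) (A : Finset (Fin m)) :
    SimpleGraph (Option (Fin m ⊕ Fin n)) :=
  SimpleGraph.fromRel (fun a b =>
    (∃ i j, a = some (Sum.inl i) ∧ b = some (Sum.inr j) ∧ j ∈ S i) ∨
    (∃ i, a = none ∧ b = some (Sum.inl i) ∧ i ∈ A))

section RedGraph

variable {n m : ℕ} (S : Fin m → Finset (Fin n)) (A : Finset (Fin m))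

lemma redGraph_adj_none (v : Option (Fin m ⊕ Fin n)) :
    (redGraph S A).Adj none v ↔ ∃ i ∈ A, v = some (Sum.inl i) := by
  simp only [redGraph, SimpleGraph.fromRel_adj]
  aesop

lemma redGraph_adj_some_inl (i : Fin m) (v : Option (Fin m ⊕ Fin n)) :
    (redGraph S A).Adj (some (Sum.inl i)) v ↔
      (∃ j ∈ S i, v = some (Sum.inr j)) ∨ (v = none ∧ i ∈ A) := by
  simp only [redGraph, SimpleGraph.fromRel_adj]
  aesop

theorem twoHop_redGraph_none :
    twoHop (redGraph S A) none
      = (fun i => some (Sum.inl i)) '' (A : Set (Fin m)) ∪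
        (fun j => some (Sum.inr j)) '' {j : Fin n | ∃ i ∈ A, j ∈ S i} := by
  ext v
  simp only [twoHop, Set.mem_ofPred_eq, Set.mem_union, Set.mem_image, Finset.mem_coe,
    redGraph_adj_none]
  constructor
  · rintro ⟨hv, ⟨i, hi, rfl⟩ | ⟨w, ⟨i, hi, rfl⟩, hiv⟩⟩
    · exact Or.inl ⟨i, hi, rfl⟩
    · rcases (redGraph_adj_some_inl S A i v).1 hiv with ⟨j, hj, rfl⟩ | ⟨rfl, -⟩
      · exact Or.inr ⟨j, ⟨i, hi, hj⟩, rfl⟩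
      · exact absurd rfl hv
  · rintro (⟨i, hi, rfl⟩ | ⟨j, ⟨i, hi, hj⟩, rfl⟩)
    · exact ⟨Option.some_ne_none _, Or.inl ⟨i, hi, rfl⟩⟩
    · exact ⟨Option.some_ne_none _, Or.inr ⟨_, ⟨i, hi, rfl⟩,
        (redGraph_adj_some_inl S A i _).2 (Or.inl ⟨j, hj, rfl⟩)⟩⟩

theorem ncard_twoHop_redGraph_none :
    (twoHop (redGraph S A) none).ncard = A.card + (A.biUnion S).card := by
  have hcovered : {j : Fin n | ∃ i ∈ A, j ∈ S i} = ↑(A.biUnion S) := by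
    ext; simp
  have hdisj : Disjoint ((fun i => (some (Sum.inl i) : Option (Fin m ⊕ Fin n))) '' ↑A)
      ((fun j => some (Sum.inr j)) '' ↑(A.biUnion S)) := by
    simp [Set.disjoint_left]
  rw [twoHop_redGraph_none, hcovered, Set.ncard_union_eq hdisj (Set.toFinite _) (Set.toFinite _),
    Set.ncard_image_of_injective _ fun _ _ h => Sum.inl_injective (Option.some_injective _ h),
    Set.ncard_image_of_injective _ fun _ _ h => Sum.inr_injective (Option.some_injective _ h),
    Set.ncard_coe_finset, Set.ncard_coe_finset]

lemma card_biUnion_eq_iff_covers :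
    (A.biUnion S).card = n ↔ ∀ u : Fin n, ∃ i ∈ A, u ∈ S i := by
  calc (A.biUnion S).card = n ↔ A.biUnion S = Finset.univ := by
        simpa using Finset.card_eq_iff_eq_univ (A.biUnion S)
    _ ↔ _ := by simp only [Finset.eq_univ_iff_forall, Finset.mem_biUnion]

end RedGraph

theorem stmt_16 (n m : ℕ) (S : Fin m → Finset (Fin n)) (A : Finset (Fin m)) :
    twoHop (redGraph S A) none
      = (fun i => some (Sum.inl i)) '' (A : Set (Fin m)) ∪
        (fun j => some (Sum.inr j)) '' {j : Fin n | ∃ i ∈ A, j ∈ S i} ∧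
    (twoHop (redGraph S A) none).ncard = A.card + (A.biUnion S).card ∧
    (twoHop (redGraph S A) none).ncard ≤ A.card + n ∧
    ((twoHop (redGraph S A) none).ncard = A.card + n ↔ ∀ u : Fin n, ∃ i ∈ A, u ∈ S i) := by
  have hcard := ncard_twoHop_redGraph_none S A
  have hle : (A.biUnion S).card ≤ n := (Finset.card_le_univ _).trans_eq (Fintype.card_fin n)
  refine ⟨twoHop_redGraph_none S A, hcard, by omega, ?_⟩
  rw [hcard, Nat.add_left_cancel_iff, card_biUnion_eq_iff_covers]
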